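/- arXiv:2304.10456 — 2 statements merged into one kernel-verified Lean document; each statement's English description precedes it below -/
import Mathlib

section
/- With τ as above on ℤ^{t+2} (t ≥ 1), and with f_i acting on a hub vector b by subtracting the i-th row of the Cartan matrix restricted to coordinates 0,...,t+1 (i.e., b_i decreases by 2 and b_{i-1}, b_{i+1} each increase by 1), and e_i acting by adding the same vector, we have τ(f_i(b)) = e_{t+1-i}(τ(b)) for all 1 ≤ i ≤ t and all b ∈ ℤ^{t+2}. -/
open Finset

/-- The local level `r = a_1 + ⋯ + a_t` of a hub vector of coefficients
`a : Fin (t+2) → ℤ`. -/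
def localLevel (t : ℕ) (a : Fin (t + 2) → ℤ) : ℤ :=
  ∑ k : Fin (t + 2), if 1 ≤ (k : ℕ) ∧ (k : ℕ) ≤ t then a k else 0

/-- The face involution on hub coordinates:
`τ(b₀,b₁,…,b_t,b_{t+1}) = (a₀+r-(b_{t+1}-a_{t+1}), -b_t, …, -b₁, a_{t+1}+r-(b₀-a₀))`. -/
def tau (t : ℕ) (a : Fin (t + 2) → ℤ) (b : Fin (t + 2) → ℤ) : Fin (t + 2) → ℤ :=
  fun k =>
    if (k : ℕ) = 0 then
      a 0 + localLevel t a - (b (Fin.last (t + 1)) - a (Fin.last (t + 1)))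
    else if (k : ℕ) = t + 1 then
      a (Fin.last (t + 1)) + localLevel t a - (b 0 - a 0)
    else
      - b ⟨t + 1 - (k : ℕ), by omega⟩

/-- The `(i,k)` entry of the Cartan matrix restricted to coordinates
`0, …, t+1` (no wraparound): `2` on the diagonal, `-1` for adjacent indices. -/
def cartanRow (t : ℕ) (i k : Fin (t + 2)) : ℤ :=
  if k = i then 2 else if (k : ℕ) + 1 = (i : ℕ) ∨ (i : ℕ) + 1 = (k : ℕ) then -1 else 0

/-- The action of `f_i` on hub vectors: `b_i` decreases by `2` and
`b_{i-1}, b_{i+1}` each increase by `1`. -/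
def fOp (t : ℕ) (i : Fin (t + 2)) (b : Fin (t + 2) → ℤ) : Fin (t + 2) → ℤ :=
  fun k => b k - cartanRow t i k

/-- The action of `e_i` on hub vectors. -/
def eOp (t : ℕ) (i : Fin (t + 2)) (b : Fin (t + 2) → ℤ) : Fin (t + 2) → ℤ :=
  fun k => b k + cartanRow t i k

/-- the intertwining property `τ(f_i(b)) = e_{t+1-i}(τ(b))`
for all `1 ≤ i ≤ t`, with `t ≥ 1`. -/
theorem tau_intertwines (t : ℕ) (ht : 1 ≤ t) (a : Fin (t + 2) → ℤ)
    (i : ℕ) (hi1 : 1 ≤ i) (hit : i ≤ t) (b : Fin (t + 2) → ℤ) :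
    tau t a (fOp t ⟨i, by omega⟩ b)
      = eOp t ⟨t + 1 - i, by omega⟩ (tau t a b) := by
  funext k
  simp only [tau, fOp, eOp, cartanRow, Fin.ext_iff, Fin.val_last, Fin.val_zero, Fin.mk.injEq,
    Fin.val_mk]
  split_ifs <;> (try simp_all only [or_false, false_or, not_or]) <;> omega
end

section
/- Let S be a binary word of length a_2 and X ⊆ U ⊆ S binary words (meaning the positions of 1s are nested), with #1(X) = x, #1(U) = u, #1(S) = j_2 - w_0 for nonnegative integers x ≤ u and w_0. Define Inv(S, U, X) as the sum over all positions p carrying a 1 of S - U of (number of 0-digits of S before p, excluding positions of X) minus (number of 1-digits of U - X before p). Then Inv(S, U, X) ≥ -(u - x)·(#1(S) - u), with equality attainable when all 1-digits of U - X precede all 1-digits of S - U and no relevant 0-digits intervene. -/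
open Finset

/-- Number of digits `1` in a binary word. -/
def onesCard {n : ℕ} (w : Fin n → Bool) : ℕ :=
  (Finset.univ.filter fun i => w i = true).card

/-- The relative inversion statistic `Inv(S,U,X)`: the sum, over all positions
`p` carrying a `1` of `S - U`, of the number of `0`-digits of `S` before `p`
minus the number of `1`-digits of `U - X` before `p`. -/
def relInv {n : ℕ} (S U X : Fin n → Bool) : ℤ :=
  ∑ p ∈ Finset.univ.filter (fun p => S p = true ∧ U p = false),
    (((Finset.univ.filter fun q => q < p ∧ S q = false).card : ℤ)
      - ((Finset.univ.filter fun q => q < p ∧ U q = true ∧ X q = false).card : ℤ))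

/-- for nested binary words `X ⊆ U ⊆ S` of length `a₂` with
`#1(X) = x`, `#1(U) = u`, `#1(S) = j₂ - w₀`, one has
`Inv(S,U,X) ≥ -(u-x)·(#1(S)-u)`, with equality when all `1`-digits of `U - X`
precede all `1`-digits of `S - U` and no `0`-digits of `S` intervene. -/
theorem relInv_lower_bound (a₂ x u j₂ w₀ : ℕ) (S U X : Fin a₂ → Bool)
    (hXU : ∀ p, X p = true → U p = true)
    (hUS : ∀ p, U p = true → S p = true)
    (hx : onesCard X = x) (hu : onesCard U = u)
    (hw₀ : w₀ ≤ j₂) (hs : onesCard S = j₂ - w₀) (hxu : x ≤ u) :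
    relInv S U X ≥ -((u : ℤ) - x) * (((j₂ : ℤ) - w₀) - u) ∧
    ((∀ p, S p = true → U p = false → ∀ q, q < p → S q = true) →
     (∀ p q, S p = true → U p = false → U q = true → X q = false → q < p) →
     relInv S U X = -((u : ℤ) - x) * (((j₂ : ℤ) - w₀) - u)) := by
  classical
  -- basic subset relations
  have hsubXU : (Finset.univ.filter fun p => X p = true) ⊆
      (Finset.univ.filter fun p : Fin a₂ => U p = true) := by
    intro p hp; simp only [mem_filter, mem_univ, true_and] at *; exact hXU p hp
  have hsubUS : (Finset.univ.filter fun p => U p = true) ⊆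
      (Finset.univ.filter fun p : Fin a₂ => S p = true) := by
    intro p hp; simp only [mem_filter, mem_univ, true_and] at *; exact hUS p hp
  -- card of U minus X positions
  have hUXset : (Finset.univ.filter fun p : Fin a₂ => U p = true ∧ X p = false)
      = (Finset.univ.filter fun p => U p = true) \ (Finset.univ.filter fun p => X p = true) := by
    ext p
    simp [Bool.not_eq_true]
  have hUXcard : (Finset.univ.filter fun p : Fin a₂ => U p = true ∧ X p = false).card = u - x := by
    rw [hUXset, card_sdiff_of_subset hsubXU]
    simp only [onesCard] at hx hu
    omega
  -- card of S minus U positions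
  have hSUset : (Finset.univ.filter fun p : Fin a₂ => S p = true ∧ U p = false)
      = (Finset.univ.filter fun p => S p = true) \ (Finset.univ.filter fun p => U p = true) := by
    ext p
    simp [Bool.not_eq_true]
  have hus : u ≤ j₂ - w₀ := by
    have := card_le_card hsubUS
    simp only [onesCard] at hu hs
    omega
  have hSUcard : (Finset.univ.filter fun p : Fin a₂ => S p = true ∧ U p = false).card
      = (j₂ - w₀) - u := by
    rw [hSUset, card_sdiff_of_subset hsubUS]
    simp only [onesCard] at hu hs
    omega
  have hcastRHS : -((u : ℤ) - x) * (((j₂ : ℤ) - w₀) - u)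
      = ((((j₂ - w₀) - u : ℕ) : ℤ)) * (-(((u - x : ℕ) : ℤ))) := by
    push_cast [Nat.cast_sub hw₀, Nat.cast_sub hxu, Nat.cast_sub hus]
    ring
  constructor
  · -- lower bound
    rw [relInv, ge_iff_le, hcastRHS, ← hSUcard]
    have hconst : ((#(Finset.univ.filter fun p : Fin a₂ => S p = true ∧ U p = false) : ℕ) : ℤ)
        * -(((u - x : ℕ) : ℤ))
        = ∑ _p ∈ Finset.univ.filter (fun p : Fin a₂ => S p = true ∧ U p = false),
            (-(((u - x : ℕ) : ℤ))) := by
      rw [Finset.sum_const, nsmul_eq_mul]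
    rw [hconst]
    apply Finset.sum_le_sum
    intro p hp
    have hg : (Finset.univ.filter fun q => q < p ∧ U q = true ∧ X q = false).card ≤ u - x := by
      rw [← hUXcard]
      apply card_le_card
      intro q hq
      simp only [mem_filter, mem_univ, true_and] at *
      exact hq.2
    have hf : (0 : ℤ) ≤ ((Finset.univ.filter fun q => q < p ∧ S q = false).card : ℤ) := by
      positivity
    have hg' : ((Finset.univ.filter fun q => q < p ∧ U q = true ∧ X q = false).card : ℤ)
        ≤ ((u - x : ℕ) : ℤ) := by exact_mod_cast hg
    linarith
  · -- equality case
    intro h1 h2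
    rw [relInv, hcastRHS, ← hSUcard]
    have hconst : ((#(Finset.univ.filter fun p : Fin a₂ => S p = true ∧ U p = false) : ℕ) : ℤ)
        * -(((u - x : ℕ) : ℤ))
        = ∑ _p ∈ Finset.univ.filter (fun p : Fin a₂ => S p = true ∧ U p = false),
            (-(((u - x : ℕ) : ℤ))) := by
      rw [Finset.sum_const, nsmul_eq_mul]
    rw [hconst]
    apply Finset.sum_congr rfl
    intro p hp
    simp only [mem_filter, mem_univ, true_and] at hp
    have hf0 : (Finset.univ.filter fun q => q < p ∧ S q = false) = ∅ := by
      ext q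
      simp only [mem_filter, mem_univ, true_and, Finset.notMem_empty, iff_false]
      rintro ⟨hqp, hSq⟩
      have := h1 p hp.1 hp.2 q hqp
      simp [this] at hSq
    have hgfull : (Finset.univ.filter fun q => q < p ∧ U q = true ∧ X q = false)
        = (Finset.univ.filter fun q : Fin a₂ => U q = true ∧ X q = false) := by
      ext q
      simp only [mem_filter, mem_univ, true_and]
      constructor
      · rintro ⟨_, h⟩; exact h
      · rintro ⟨hUq, hXq⟩; exact ⟨h2 p q hp.1 hp.2 hUq hXq, hUq, hXq⟩
    rw [hf0, hgfull, hUXcard]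
    simp
end
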